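/- For all n ≥ 0 and real x, φ_{n+1,λ}(x) = x ∑_{k=0}^{n} C(n,k) (-1)^{n-k} ⟨λ⟩_{n-k,λ} (φ'_{k,λ}(x) + φ_{k,λ}(x)). -/

import Mathlib

open Finset

/-- Generalized falling factorial `(x)_{n,lam} = x(x-lam)...(x-(n-1)lam)`. -/
noncomputable def dfall (lam x : ℝ) (n : ℕ) : ℝ := ∏ i ∈ Finset.range n, (x - i * lam)

/-- Generalized rising factorial `⟨x⟩_{n,lam} = x(x+lam)...(x+(n-1)lam)`. -/
noncomputable def drise (lam x : ℝ) (n : ℕ) : ℝ := ∏ i ∈ Finset.range n, (x + i * lam)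

lemma drise_one (lam x : ℝ) : drise lam x 0 = 1 := by simp [drise]


lemma dfall_succ (lam x : ℝ) (n : ℕ) :
    dfall lam x (n + 1) = dfall lam x n * (x - n * lam) := by
  simp [dfall, Finset.prod_range_succ]

lemma drise_eq (lam : ℝ) (m : ℕ) : drise lam lam m = lam ^ m * m.factorial := by
  induction m with
  | zero => simp [drise]
  | succ m ih =>
    have : drise lam lam (m + 1) = drise lam lam m * (lam + m * lam) := by
      simp [drise, Finset.prod_range_succ]
    rw [this, ih, Nat.factorial_succ, pow_succ]
    push_cast
    ring

lemma uniq (m : ℕ) (c : ℕ → ℝ)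
    (h : ∀ x : ℝ, ∑ k ∈ range m, c k * dfall 1 x k = 0) :
    ∀ j, j < m → c j = 0 := by
  intro j
  induction j using Nat.strong_induction_on with
  | _ j ih =>
    intro hj
    have hx := h j
    have hsum : ∑ k ∈ range m, c k * dfall 1 (j : ℝ) k = c j * dfall 1 (j : ℝ) j := by
      apply Finset.sum_eq_single
      · intro k hk hkj
        rcases lt_or_gt_of_ne hkj with hlt | hgt
        · rw [ih k hlt (lt_trans hlt hj)]; ring
        · have hz : dfall 1 (j : ℝ) k = 0 := by
            apply Finset.prod_eq_zero (Finset.mem_range.mpr hgt)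
            simp
          rw [hz]; ring
      · intro h'; exact absurd (Finset.mem_range.mpr hj) h'
    have hpos : 0 < dfall 1 (j : ℝ) j := by
      apply Finset.prod_pos
      intro i hi
      have hij : (i : ℝ) < j := by exact_mod_cast Finset.mem_range.mp hi
      simp only [mul_one]
      linarith
    rw [hsum] at hx
    rcases mul_eq_zero.mp hx with h1 | h2
    · exact h1
    · linarith

lemma Srec (lam : ℝ) (S : ℕ → ℕ → ℝ)
    (hS : ∀ (n : ℕ) (x : ℝ), dfall lam x n = ∑ k ∈ Finset.range (n + 1), S n k * dfall 1 x k)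
    (n k : ℕ) (hk : k < n + 2) :
    S (n + 1) k = (if k = 0 then 0 else S n (k - 1)) +
      (if k ≤ n then S n k else 0) * ((k : ℝ) - n * lam) := by
  set T : ℕ → ℝ := fun k => (if k = 0 then 0 else S n (k - 1)) +
      (if k ≤ n then S n k else 0) * ((k : ℝ) - n * lam) with hT
  have h0 : ∀ x : ℝ, ∑ j ∈ range (n + 2), (S (n + 1) j - T j) * dfall 1 x j = 0 := by
    intro x
    have hsub : ∑ j ∈ range (n + 2), (S (n + 1) j - T j) * dfall 1 x j =
        (∑ j ∈ range (n + 2), S (n + 1) j * dfall 1 x j) -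
        ∑ j ∈ range (n + 2), T j * dfall 1 x j := by
      rw [← Finset.sum_sub_distrib]
      exact Finset.sum_congr rfl fun j _ => by ring
    rw [hsub, ← hS (n + 1) x]
    have e1 : ∑ j ∈ range (n + 2), T j * dfall 1 x j =
        (∑ j ∈ range (n + 1), S n j * dfall 1 x (j + 1)) +
        ∑ j ∈ range (n + 1), S n j * ((j : ℝ) - n * lam) * dfall 1 x j := by
      have hsplit : ∀ j, T j * dfall 1 x j =
          (if j = 0 then 0 else S n (j - 1)) * dfall 1 x j +
          (if j ≤ n then S n j else 0) * ((j : ℝ) - n * lam) * dfall 1 x j := by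
        intro j; rw [hT]; ring
      rw [Finset.sum_congr rfl fun j _ => hsplit j, Finset.sum_add_distrib]
      congr 1
      · rw [Finset.sum_range_succ']
        simp
      · rw [Finset.sum_range_succ]
        simp [Nat.lt_irrefl]
        apply Finset.sum_congr rfl
        intro j hj
        have : j ≤ n := Nat.lt_succ_iff.mp (Finset.mem_range.mp hj)
        simp [this]
    rw [e1, dfall_succ, hS n x, Finset.sum_mul]
    have e2 : ∀ j, S n j * dfall 1 x j * (x - n * lam) =
        S n j * dfall 1 x (j + 1) + S n j * ((j : ℝ) - n * lam) * dfall 1 x j := by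
      intro j
      rw [dfall_succ 1 x j]
      ring
    rw [Finset.sum_congr rfl fun j _ => e2 j, Finset.sum_add_distrib]
    ring
  have := uniq (n + 2) _ h0 k hk
  rw [hT] at this
  simp only at this
  linarith

lemma deriv_phi (S : ℕ → ℕ → ℝ) (phi : ℕ → ℝ → ℝ)
    (hphi : ∀ (n : ℕ) (x : ℝ), phi n x = ∑ k ∈ Finset.range (n + 1), S n k * x ^ k)
    (n : ℕ) (x : ℝ) :
    deriv (phi n) x = ∑ k ∈ range (n + 1), S n k * (k * x ^ (k - 1)) := by
  have hfun : phi n = fun y => ∑ k ∈ range (n + 1), S n k * y ^ k := funext (hphi n)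
  rw [hfun]
  have hd : HasDerivAt (fun y : ℝ => ∑ k ∈ range (n + 1), S n k * y ^ k)
      (∑ k ∈ range (n + 1), S n k * (k * x ^ (k - 1))) x := by
    apply HasDerivAt.fun_sum
    intro k _
    exact (hasDerivAt_pow k x).const_mul (S n k)
  exact hd.deriv

lemma mul_pow_deriv (k : ℕ) (x : ℝ) : x * ((k : ℝ) * x ^ (k - 1)) = k * x ^ k := by
  cases k with
  | zero => simp
  | succ k => rw [Nat.succ_sub_one, pow_succ]; ring

lemma phirec (lam : ℝ) (S : ℕ → ℕ → ℝ)
    (hS : ∀ (n : ℕ) (x : ℝ), dfall lam x n = ∑ k ∈ Finset.range (n + 1), S n k * dfall 1 x k)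
    (phi : ℕ → ℝ → ℝ)
    (hphi : ∀ (n : ℕ) (x : ℝ), phi n x = ∑ k ∈ Finset.range (n + 1), S n k * x ^ k)
    (n : ℕ) (x : ℝ) :
    phi (n + 1) x = x * (deriv (phi n) x + phi n x) - n * lam * phi n x := by
  rw [hphi (n + 1) x]
  have hrw : ∑ k ∈ range (n + 2), S (n + 1) k * x ^ k =
      ∑ k ∈ range (n + 2), ((if k = 0 then 0 else S n (k - 1)) +
        (if k ≤ n then S n k else 0) * ((k : ℝ) - n * lam)) * x ^ k :=
    Finset.sum_congr rfl fun k hk => by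
      rw [Srec lam S hS n k (Finset.mem_range.mp hk)]
  rw [hrw]
  have hsplit : ∑ k ∈ range (n + 2), ((if k = 0 then 0 else S n (k - 1)) +
        (if k ≤ n then S n k else 0) * ((k : ℝ) - n * lam)) * x ^ k =
      (∑ k ∈ range (n + 2), (if k = 0 then 0 else S n (k - 1)) * x ^ k) +
      ∑ k ∈ range (n + 2), (if k ≤ n then S n k else 0) * ((k : ℝ) - n * lam) * x ^ k := by
    rw [← Finset.sum_add_distrib]
    exact Finset.sum_congr rfl fun k _ => by ring
  rw [hsplit]
  have e1 : ∑ k ∈ range (n + 2), (if k = 0 then 0 else S n (k - 1)) * x ^ k =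
      x * phi n x := by
    rw [Finset.sum_range_succ']
    simp only [if_true, if_false, zero_mul, add_zero, Nat.add_sub_cancel]
    rw [hphi n x, Finset.mul_sum]
    apply Finset.sum_congr rfl
    intro k _
    rw [if_neg (by omega : ¬ k + 1 = 0), pow_succ]
    ring
  have e2 : ∑ k ∈ range (n + 2), (if k ≤ n then S n k else 0) * ((k : ℝ) - n * lam) * x ^ k =
      x * deriv (phi n) x - n * lam * phi n x := by
    rw [Finset.sum_range_succ]
    rw [if_neg (by omega : ¬ n + 1 ≤ n)]
    simp only [zero_mul]
    rw [add_zero]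
    rw [deriv_phi S phi hphi n x, hphi n x, Finset.mul_sum, Finset.mul_sum,
      ← Finset.sum_sub_distrib]
    apply Finset.sum_congr rfl
    intro k hk
    have hkn : k ≤ n := Nat.lt_succ_iff.mp (Finset.mem_range.mp hk)
    rw [if_pos hkn, show x * (S n k * ((k : ℝ) * x ^ (k - 1))) = S n k * (x * ((k:ℝ) * x ^ (k-1))) from by ring, mul_pow_deriv k x]
    ring
  rw [e1, e2]
  ring

lemma coeff_step (lam : ℝ) (n k : ℕ) (hk : k ≤ n) :
    ((n + 1).choose k : ℝ) * (-1 : ℝ) ^ (n + 1 - k) * drise lam lam (n + 1 - k) =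
    -((n : ℝ) + 1) * lam *
      ((n.choose k : ℝ) * (-1 : ℝ) ^ (n - k) * drise lam lam (n - k)) := by
  have h1 : n + 1 - k = (n - k) + 1 := by omega
  rw [h1, drise_eq, drise_eq, pow_succ, pow_succ]
  have e1 : n.choose k * k.factorial * (n - k).factorial = n.factorial :=
    Nat.choose_mul_factorial_mul_factorial hk
  have e2 : (n + 1).choose k * k.factorial * ((n - k) + 1).factorial = (n + 1).factorial := by
    have h := Nat.choose_mul_factorial_mul_factorial (show k ≤ n + 1 by omega)
    rwa [show n + 1 - k = (n - k) + 1 from h1] at h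
  have E1 : (n.choose k : ℝ) * k.factorial * (n - k).factorial = n.factorial := by
    exact_mod_cast congrArg (Nat.cast : ℕ → ℝ) e1
  have E2 : ((n + 1).choose k : ℝ) * k.factorial * ((n - k) + 1).factorial
      = (n + 1).factorial := by exact_mod_cast congrArg (Nat.cast : ℕ → ℝ) e2
  have hkf : (k.factorial : ℝ) ≠ 0 := by positivity
  have h2 : ((n + 1).choose k : ℝ) * ((n - k) + 1).factorial =
      ((n : ℝ) + 1) * ((n.choose k : ℝ) * (n - k).factorial) := by
    apply mul_right_cancel₀ hkf
    calc ((n + 1).choose k : ℝ) * ((n - k) + 1).factorial * k.factorial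
        = ((n + 1).choose k : ℝ) * k.factorial * ((n - k) + 1).factorial := by ring
      _ = ((n + 1).factorial : ℝ) := E2
      _ = ((n : ℝ) + 1) * n.factorial := by rw [Nat.factorial_succ]; push_cast; ring
      _ = ((n : ℝ) + 1) * (n.choose k * k.factorial * (n - k).factorial) := by rw [E1]
      _ = ((n : ℝ) + 1) * ((n.choose k : ℝ) * (n - k).factorial) * k.factorial := by ring
  linear_combination ((-1 : ℝ) ^ (n - k) * (-1) * lam ^ (n - k) * lam) * h2

theorem stmt13 (lam : ℝ) (S : ℕ → ℕ → ℝ)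
    (hS : ∀ (n : ℕ) (x : ℝ), dfall lam x n = ∑ k ∈ Finset.range (n + 1), S n k * dfall 1 x k)
    (phi : ℕ → ℝ → ℝ)
    (hphi : ∀ (n : ℕ) (x : ℝ), phi n x = ∑ k ∈ Finset.range (n + 1), S n k * x ^ k) (n : ℕ) (x : ℝ) :
    phi (n + 1) x = x * ∑ k ∈ Finset.range (n + 1),
      (n.choose k : ℝ) * (-1 : ℝ) ^ (n - k) * drise lam lam (n - k) *
        (deriv (phi k) x + phi k x) := by
  induction n with
  | zero =>
    rw [phirec lam S hS phi hphi 0 x]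
    simp [drise_one]
  | succ n ih =>
    rw [phirec lam S hS phi hphi (n + 1) x]
    rw [Finset.sum_range_succ (n := n + 1)]
    rw [show (n + 1) - (n + 1) = 0 from by omega, drise_one, Nat.choose_self]
    have hco : ∑ k ∈ range (n + 1),
        ((n + 1).choose k : ℝ) * (-1 : ℝ) ^ (n + 1 - k) * drise lam lam (n + 1 - k) *
          (deriv (phi k) x + phi k x) =
        -((n : ℝ) + 1) * lam * ∑ k ∈ range (n + 1),
          (n.choose k : ℝ) * (-1 : ℝ) ^ (n - k) * drise lam lam (n - k) *
            (deriv (phi k) x + phi k x) := by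
      rw [Finset.mul_sum]
      apply Finset.sum_congr rfl
      intro k hk
      have hkn : k ≤ n := Nat.lt_succ_iff.mp (Finset.mem_range.mp hk)
      rw [coeff_step lam n k hkn]
      ring
    rw [hco, ih, Nat.cast_succ, Nat.cast_one]
    ring
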